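/- Let K(u) = ∑_{j=1}^{r} c_j u_j^{2k_j} on ℝ^r with c_j > 0 and k_j positive integers, and let Z_n = ∏_{j=1}^r ∫_{-ε}^{ε} exp(-n c_j u_j^{2k_j}) |u_j|^{h_j} du_j for nonnegative integers h_j. Then n^{λ} Z_n converges to a positive constant as n → ∞, where λ = ∑_{j=1}^{r} (h_j + 1)/(2 k_j). -/

import Mathlib

open MeasureTheory Filter Set Real Topology

/-! The integrand is a product over the coordinates, so it suffices to treat one factor.
For `s > 0` the substitution `t = s ^ (1 / (2k)) u` turns `exp (-s c u ^ (2k)) |u| ^ h` into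
`exp (-c t ^ (2k)) |t| ^ h`, at the cost of the factor `s ^ (-(h + 1) / (2k))`, while the
interval `[-ε, ε]` grows to all of `ℝ`. Hence the rescaled factor tends to
`∫ exp (-c t ^ (2k)) |t| ^ h`, which is finite and positive. -/

section
variable {c : ℝ} {k : ℕ}

theorem integrable_exp_neg_mul_pow_mul_abs_pow (hc : 0 < c) (hk : k ≠ 0) (h : ℕ) :
    Integrable fun t : ℝ => exp (-c * t ^ (2 * k)) * |t| ^ h := by
  have hIoi : IntegrableOn (fun t : ℝ => exp (-c * t ^ (2 * k)) * t ^ h) (Ioi 0) := by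
    refine (integrableOn_rpow_mul_exp_neg_mul_rpow (p := (2 * k : ℕ)) (s := h) (b := c)
      (neg_one_lt_zero.trans_le h.cast_nonneg) (by positivity) hc).congr_fun
      (fun t _ => ?_) measurableSet_Ioi
    simp only [rpow_natCast, mul_comm]
  have := (integrable_fun_norm_addHaar (volume : Measure ℝ)
    (f := fun t : ℝ => exp (-c * t ^ (2 * k)) * t ^ h)).2 (by simpa using hIoi)
  simpa [(even_two_mul k).pow_abs] using this

theorem integral_exp_neg_mul_pow_mul_abs_pow_pos (hc : 0 < c) (hk : k ≠ 0) (h : ℕ) :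
    0 < ∫ t : ℝ, exp (-c * t ^ (2 * k)) * |t| ^ h := by
  rw [integral_pos_iff_support_of_nonneg (fun t => by positivity)
    (integrable_exp_neg_mul_pow_mul_abs_pow hc hk h)]
  have hIoi : Ioi (0 : ℝ) ⊆ Function.support fun t : ℝ => exp (-c * t ^ (2 * k)) * |t| ^ h :=
    fun t ht => by
      have : 0 < |t| := abs_pos.mpr (ne_of_gt ht)
      exact (by positivity : 0 < exp (-c * t ^ (2 * k)) * |t| ^ h).ne'
  exact (by simp : 0 < volume (Ioi (0 : ℝ))).trans_le (measure_mono hIoi)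

theorem rpow_mul_intervalIntegral_exp_neg_mul_pow_mul_abs_pow {s : ℝ} (hs : 0 < s) (hk : k ≠ 0)
    (h : ℕ) (a b : ℝ) :
    s ^ (((h : ℝ) + 1) / (2 * k)) * ∫ u in a..b, exp (-s * c * u ^ (2 * k)) * |u| ^ h =
      ∫ t in s ^ (2 * k : ℝ)⁻¹ * a..s ^ (2 * k : ℝ)⁻¹ * b, exp (-c * t ^ (2 * k)) * |t| ^ h := by
  set σ := s ^ (2 * k : ℝ)⁻¹
  have hσ : 0 < σ := rpow_pos_of_pos hs _
  have hσ_pow : σ ^ (2 * k) = s := by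
    rw [← rpow_natCast, ← rpow_mul hs.le]; push_cast
    rw [inv_mul_cancel₀ (by positivity), rpow_one]
  have hs_rpow : s ^ (((h : ℝ) + 1) / (2 * k)) = σ * σ ^ h := by
    rw [← pow_succ', ← rpow_natCast, ← rpow_mul hs.le]; push_cast; ring_nf
  rw [← intervalIntegral.smul_integral_comp_mul_left, hs_rpow, mul_assoc, smul_eq_mul,
    ← intervalIntegral.integral_const_mul]
  congr 2
  ext u
  rw [mul_pow, hσ_pow, abs_mul, abs_of_pos hσ, mul_pow]
  ring_nf

theorem tendsto_rpow_mul_intervalIntegral_exp_neg_mul_pow_mul_abs_pow (hc : 0 < c) (hk : k ≠ 0)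
    (h : ℕ) {ε : ℝ} (hε : 0 < ε) :
    Tendsto (fun s : ℝ => s ^ (((h : ℝ) + 1) / (2 * k)) *
        ∫ u in (-ε)..ε, exp (-s * c * u ^ (2 * k)) * |u| ^ h) atTop
      (𝓝 (∫ t : ℝ, exp (-c * t ^ (2 * k)) * |t| ^ h)) := by
  have hσ : Tendsto (fun s : ℝ => s ^ (2 * k : ℝ)⁻¹) atTop atTop :=
    tendsto_rpow_atTop (by positivity)
  refine (intervalIntegral_tendsto_integral (integrable_exp_neg_mul_pow_mul_abs_pow hc hk h)
    (hσ.atTop_mul_const_of_neg (neg_neg_iff_pos.mpr hε)) (hσ.atTop_mul_const hε)).congr' ?_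
  filter_upwards [eventually_gt_atTop 0] with s hs
  exact (rpow_mul_intervalIntegral_exp_neg_mul_pow_mul_abs_pow hs hk h _ _).symm
end

/-- RLCT under the additive normal crossing assumption: with
Z_n = ∏_j ∫_{-ε}^{ε} exp(-n c_j u^{2k_j}) |u|^{h_j} du and
λ = ∑_j (h_j + 1)/(2 k_j), the rescaled integrals n^λ Z_n converge to a
positive constant. -/
theorem rlct_additive_scaling
    {r : ℕ} (c : Fin r → ℝ) (hc : ∀ j, 0 < c j)
    (k : Fin r → ℕ) (hk : ∀ j, 1 ≤ k j) (h : Fin r → ℕ)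
    (ε : ℝ) (hε : 0 < ε)
    (Z : ℕ → ℝ)
    (hZ : ∀ n : ℕ, Z n =
      ∏ j, ∫ u in (-ε)..ε, Real.exp (-(n : ℝ) * c j * u ^ (2 * k j)) * |u| ^ (h j))
    (lam : ℝ) (hlam : lam = ∑ j, ((h j : ℝ) + 1) / (2 * k j)) :
    ∃ C : ℝ, 0 < C ∧ Tendsto (fun n : ℕ => (n : ℝ) ^ lam * Z n) atTop (nhds C) := by
  have hk0 (j : Fin r) : k j ≠ 0 := Nat.one_le_iff_ne_zero.mp (hk j)
  refine ⟨∏ j, ∫ t : ℝ, exp (-c j * t ^ (2 * k j)) * |t| ^ h j,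
    Finset.prod_pos fun j _ => integral_exp_neg_mul_pow_mul_abs_pow_pos (hc j) (hk0 j) (h j), ?_⟩
  have hfactors := tendsto_finsetProd Finset.univ fun j _ =>
    (tendsto_rpow_mul_intervalIntegral_exp_neg_mul_pow_mul_abs_pow (hc j) (hk0 j) (h j) hε).comp
      tendsto_natCast_atTop_atTop
  refine hfactors.congr' ?_
  filter_upwards [eventually_gt_atTop 0] with n hn
  rw [hZ, hlam, rpow_sum_of_pos (Nat.cast_pos.mpr hn), ← Finset.prod_mul_distrib]
  rfl
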